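/- arXiv:1412.8441 — 7 statements merged into one kernel-verified Lean document; each statement's English description precedes it below -/
import Mathlib

section
/- Fix a complex number λ with Re(λ) > 0 and -π < Im(λ) < π, and b₀ ∈ ℝ. The map τ ↦ (2cosh(λ/2), 2cosh(τ/2)/tanh(λ/2), 2cosh((τ+λ)/2)/tanh(λ/2)) is injective on the strip {τ ∈ ℂ : b₀ ≤ Im(τ) < b₀ + 2π}, where triples (x,y,z) and (x',y',z') are identified if they differ by simultaneous sign changes (x,y,z)↦(-x,y,-z) or (x,y,z)↦(x,-y,-z) (or the composite). -/
open Complex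

lemma my_sinh_zero {w : ℂ} (h : Complex.sinh w = 0) :
    ∃ k : ℤ, w = (k : ℂ) * Real.pi * I := by
  have h2 : Complex.sin (w * I) = 0 := by rw [Complex.sin_mul_I, h, zero_mul]
  obtain ⟨k, hk⟩ := Complex.sin_eq_zero_iff.mp h2
  refine ⟨-k, ?_⟩
  push_cast
  linear_combination (-I) * hk + w * Complex.I_sq

lemma my_cosh_zero {w : ℂ} (h : Complex.cosh w = 0) :
    ∃ k : ℤ, w = (2 * (k : ℂ) + 1) * Real.pi / 2 * (-I) := by
  have h2 : Complex.cos (w * I) = 0 := by rw [Complex.cos_mul_I, h]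
  obtain ⟨k, hk⟩ := Complex.cos_eq_zero_iff.mp h2
  refine ⟨k, ?_⟩
  linear_combination (-I) * hk + w * Complex.I_sq

lemma cosh_sub_cosh' (a b : ℂ) :
    Complex.cosh a - Complex.cosh b
      = 2 * Complex.sinh ((a + b) / 2) * Complex.sinh ((a - b) / 2) := by
  have h1 := Complex.cosh_add ((a + b) / 2) ((a - b) / 2)
  have h2 := Complex.cosh_sub ((a + b) / 2) ((a - b) / 2)
  rw [show (a + b) / 2 + (a - b) / 2 = a by ring] at h1
  rw [show (a + b) / 2 - (a - b) / 2 = b by ring] at h2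
  linear_combination h1 - h2

lemma cosh_add_cosh' (a b : ℂ) :
    Complex.cosh a + Complex.cosh b
      = 2 * Complex.cosh ((a + b) / 2) * Complex.cosh ((a - b) / 2) := by
  have h1 := Complex.cosh_add ((a + b) / 2) ((a - b) / 2)
  have h2 := Complex.cosh_sub ((a + b) / 2) ((a - b) / 2)
  rw [show (a + b) / 2 + (a - b) / 2 = a by ring] at h1
  rw [show (a + b) / 2 - (a - b) / 2 = b by ring] at h2
  linear_combination h1 + h2

lemma plus_case (lam τ₁ τ₂ : ℂ) (hre : 0 < lam.re)
    (hd1 : τ₂.im - τ₁.im < 2 * Real.pi) (hd2 : -(2 * Real.pi) < τ₂.im - τ₁.im)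
    (hA : Complex.cosh (τ₂ / 2) = Complex.cosh (τ₁ / 2))
    (hB : Complex.cosh ((τ₂ + lam) / 2) = Complex.cosh ((τ₁ + lam) / 2)) :
    τ₁ = τ₂ := by
  have hπ := Real.pi_pos
  have done_of_v : Complex.sinh ((τ₂ / 2 - τ₁ / 2) / 2) = 0 → τ₁ = τ₂ := by
    intro hv
    obtain ⟨k, hk⟩ := my_sinh_zero hv
    have hk' : τ₂ - τ₁ = (k : ℂ) * Real.pi * I * 4 := by linear_combination 4 * hk
    have him : τ₂.im - τ₁.im = (k : ℝ) * Real.pi * 4 := by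
      have := congrArg Complex.im hk'
      simpa using this
    have hk0 : k = 0 := by
      rcases lt_trichotomy k 0 with h | h | h
      · exfalso
        have hk1 : k ≤ -1 := by omega
        have : (k : ℝ) ≤ -1 := by exact_mod_cast hk1
        nlinarith
      · exact h
      · exfalso
        have : (1 : ℝ) ≤ (k : ℝ) := by exact_mod_cast h
        nlinarith
    rw [hk0] at hk'
    have : τ₂ - τ₁ = 0 := by simpa using hk'
    linear_combination -this
  have eA : 2 * Complex.sinh ((τ₂ / 2 + τ₁ / 2) / 2) * Complex.sinh ((τ₂ / 2 - τ₁ / 2) / 2) = 0 := by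
    rw [← cosh_sub_cosh', hA]; ring
  rcases mul_eq_zero.mp eA with h | hv
  · rcases mul_eq_zero.mp h with h2 | hu
    · norm_num at h2
    · have eB : 2 * Complex.sinh (((τ₂ + lam) / 2 + (τ₁ + lam) / 2) / 2) *
          Complex.sinh (((τ₂ + lam) / 2 - (τ₁ + lam) / 2) / 2) = 0 := by
        rw [← cosh_sub_cosh', hB]; ring
      rcases mul_eq_zero.mp eB with h' | hv'
      · rcases mul_eq_zero.mp h' with h2' | hu'
        · norm_num at h2'
        · exfalso
          obtain ⟨k, hk⟩ := my_sinh_zero hu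
          obtain ⟨k', hk'⟩ := my_sinh_zero hu'
          have hlam : lam = ((k' : ℂ) - k) * Real.pi * I * 2 := by
            linear_combination 2 * hk' - 2 * hk
          have : lam.re = 0 := by rw [hlam]; simp
          linarith
      · apply done_of_v
        rw [show ((τ₂ + lam) / 2 - (τ₁ + lam) / 2) / 2 = (τ₂ / 2 - τ₁ / 2) / 2 by ring] at hv'
        exact hv'
  · exact done_of_v hv

lemma minus_case (lam τ₁ τ₂ : ℂ) (hre : 0 < lam.re)
    (hd1 : τ₂.im - τ₁.im < 2 * Real.pi) (hd2 : -(2 * Real.pi) < τ₂.im - τ₁.im)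
    (hA : Complex.cosh (τ₂ / 2) = -Complex.cosh (τ₁ / 2))
    (hB : Complex.cosh ((τ₂ + lam) / 2) = -Complex.cosh ((τ₁ + lam) / 2)) :
    τ₁ = τ₂ := by
  exfalso
  have hπ := Real.pi_pos
  have no_v : Complex.cosh ((τ₂ / 2 - τ₁ / 2) / 2) ≠ 0 := by
    intro hv
    obtain ⟨k, hk⟩ := my_cosh_zero hv
    have hk' : τ₂ - τ₁ = (2 * (k : ℂ) + 1) * Real.pi * 2 * (-I) := by
      linear_combination 4 * hk
    have him : τ₂.im - τ₁.im = -((2 * (k : ℝ) + 1) * Real.pi * 2) := by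
      have := congrArg Complex.im hk'
      simpa using this
    rcases le_or_gt 0 k with h | h
    · have : (0 : ℝ) ≤ (k : ℝ) := by exact_mod_cast h
      nlinarith
    · have hk1 : k ≤ -1 := by omega
      have : (k : ℝ) ≤ -1 := by exact_mod_cast hk1
      nlinarith
  have eA : 2 * Complex.cosh ((τ₂ / 2 + τ₁ / 2) / 2) * Complex.cosh ((τ₂ / 2 - τ₁ / 2) / 2) = 0 := by
    rw [← cosh_add_cosh', hA]; ring
  rcases mul_eq_zero.mp eA with h | hv
  · rcases mul_eq_zero.mp h with h2 | hu
    · norm_num at h2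
    · have eB : 2 * Complex.cosh (((τ₂ + lam) / 2 + (τ₁ + lam) / 2) / 2) *
          Complex.cosh (((τ₂ + lam) / 2 - (τ₁ + lam) / 2) / 2) = 0 := by
        rw [← cosh_add_cosh', hB]; ring
      rcases mul_eq_zero.mp eB with h' | hv'
      · rcases mul_eq_zero.mp h' with h2' | hu'
        · norm_num at h2'
        · obtain ⟨k, hk⟩ := my_cosh_zero hu
          obtain ⟨k', hk'⟩ := my_cosh_zero hu'
          have hlam : lam = ((k' : ℂ) - k) * Real.pi * 2 * (-I) := by
            linear_combination 2 * hk' - 2 * hk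
          have : lam.re = 0 := by rw [hlam]; simp
          linarith
      · apply no_v
        rw [show ((τ₂ + lam) / 2 - (τ₁ + lam) / 2) / 2 = (τ₂ / 2 - τ₁ / 2) / 2 by ring] at hv'
        exact hv'
  · exact no_v hv

theorem complex_FN_injective
    (lam : ℂ) (hre : 0 < lam.re) (him : -Real.pi < lam.im ∧ lam.im < Real.pi)
    (b₀ : ℝ)
    (F : ℂ → ℂ × ℂ × ℂ)
    (hF : ∀ τ, F τ = (2 * Complex.cosh (lam / 2),
        2 * Complex.cosh (τ / 2) / Complex.tanh (lam / 2),
        2 * Complex.cosh ((τ + lam) / 2) / Complex.tanh (lam / 2)))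
    (τ₁ τ₂ : ℂ)
    (h₁ : b₀ ≤ τ₁.im ∧ τ₁.im < b₀ + 2 * Real.pi)
    (h₂ : b₀ ≤ τ₂.im ∧ τ₂.im < b₀ + 2 * Real.pi)
    (heq : F τ₂ = F τ₁ ∨
        F τ₂ = (-(F τ₁).1, (F τ₁).2.1, -(F τ₁).2.2) ∨
        F τ₂ = ((F τ₁).1, -(F τ₁).2.1, -(F τ₁).2.2) ∨
        F τ₂ = (-(F τ₁).1, -(F τ₁).2.1, (F τ₁).2.2)) :
    τ₁ = τ₂ := by
  have hπ := Real.pi_pos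
  have hsl : Complex.sinh (lam / 2) ≠ 0 := by
    intro h
    obtain ⟨k, hk⟩ := my_sinh_zero h
    have hlam : lam = (k : ℂ) * Real.pi * I * 2 := by linear_combination 2 * hk
    have : lam.re = 0 := by rw [hlam]; simp
    linarith
  have hcl : Complex.cosh (lam / 2) ≠ 0 := by
    intro h
    obtain ⟨k, hk⟩ := my_cosh_zero h
    have hlam : lam = (2 * (k : ℂ) + 1) * Real.pi * (-I) := by linear_combination 2 * hk
    have : lam.re = 0 := by rw [hlam]; simp
    linarith
  have ht : Complex.tanh (lam / 2) ≠ 0 := by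
    rw [Complex.tanh_eq_sinh_div_cosh]
    exact div_ne_zero hsl hcl
  have hd1 : τ₂.im - τ₁.im < 2 * Real.pi := by linarith [h₁.1, h₂.2]
  have hd2 : -(2 * Real.pi) < τ₂.im - τ₁.im := by linarith [h₁.2, h₂.1]
  rw [hF τ₁, hF τ₂] at heq
  simp only [Prod.mk.injEq] at heq
  rcases heq with ⟨_, hy, hz⟩ | ⟨hx, _, _⟩ | ⟨_, hy, hz⟩ | ⟨hx, _, _⟩
  · have hA : Complex.cosh (τ₂ / 2) = Complex.cosh (τ₁ / 2) := by
      field_simp at hy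
      first
      | exact hy
      | linear_combination hy
      | linear_combination hy / 2
      | linear_combination -hy
      | linear_combination -(hy) / 2
    have hB : Complex.cosh ((τ₂ + lam) / 2) = Complex.cosh ((τ₁ + lam) / 2) := by
      field_simp at hz
      first
      | exact hz
      | linear_combination hz
      | linear_combination hz / 2
      | linear_combination -hz
      | linear_combination -(hz) / 2
    exact plus_case lam τ₁ τ₂ hre hd1 hd2 hA hB
  · exact absurd (by linear_combination hx / 4 : Complex.cosh (lam / 2) = 0) hcl
  · have hA : Complex.cosh (τ₂ / 2) = -Complex.cosh (τ₁ / 2) := by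
      field_simp at hy
      first
      | exact hy
      | linear_combination hy
      | linear_combination hy / 2
      | linear_combination -hy
      | linear_combination -(hy) / 2
    have hB : Complex.cosh ((τ₂ + lam) / 2) = -Complex.cosh ((τ₁ + lam) / 2) := by
      field_simp at hz
      first
      | exact hz
      | linear_combination hz
      | linear_combination hz / 2
      | linear_combination -hz
      | linear_combination -(hz) / 2
    exact minus_case lam τ₁ τ₂ hre hd1 hd2 hA hB
  · exact absurd (by linear_combination hx / 4 : Complex.cosh (lam / 2) = 0) hcl
end

section
/- Any triple of the form (x, y, z) = (2cosh(λ/2), 2cosh(τ/2)/tanh(λ/2), 2cosh((τ+λ)/2)/tanh(λ/2)), with λ, τ ∈ ℂ and λ ∉ π√-1·ℤ, satisfies the once-punctured torus relation x² + y² + z² - xyz = 0. -/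
open Complex

theorem Complex.sinh_eq_zero_iff {z : ℂ} : sinh z = 0 ↔ ∃ k : ℤ, z = k * Real.pi * I := by
  rw [← or_iff_left I_ne_zero (a := sinh z = 0), ← mul_eq_zero, ← sin_mul_I, sin_eq_zero_iff]
  constructor
  · rintro ⟨k, hk⟩
    exact ⟨-k, by push_cast; linear_combination (-I) * hk + z * I_sq⟩
  · rintro ⟨k, rfl⟩
    exact ⟨-k, by push_cast; linear_combination (k * Real.pi) * I_sq⟩

/-- With `c, s = cosh, sinh (λ/2)` and `C, S = cosh, sinh (τ/2)` this is the Fenchel–Nielsen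
triple, `C * c + S * s` being `cosh ((τ + λ)/2)` by the addition formula. -/
theorem markov_relation_of_sq_sub_sq_eq_one {K : Type*} [Field K] {c s C S : K}
    (hcs : c ^ 2 - s ^ 2 = 1) (hCS : C ^ 2 - S ^ 2 = 1) (hs : s ≠ 0) :
    (2 * c) ^ 2 + (2 * C / (s / c)) ^ 2 + (2 * (C * c + S * s) / (s / c)) ^ 2
      - 2 * c * (2 * C / (s / c)) * (2 * (C * c + S * s) / (s / c)) = 0 := by
  simp only [div_div_eq_mul_div]
  field_simp
  linear_combination (-4 * c ^ 2 * C ^ 2) * hcs + (-4 * c ^ 2 * s ^ 2) * hCS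

theorem FN_satisfies_character_variety_relation
    (lam τ : ℂ) (hlam : ¬ ∃ k : ℤ, lam = (k : ℂ) * Real.pi * Complex.I) :
    (2 * Complex.cosh (lam / 2)) ^ 2
      + (2 * Complex.cosh (τ / 2) / Complex.tanh (lam / 2)) ^ 2
      + (2 * Complex.cosh ((τ + lam) / 2) / Complex.tanh (lam / 2)) ^ 2
      - (2 * Complex.cosh (lam / 2))
        * (2 * Complex.cosh (τ / 2) / Complex.tanh (lam / 2))
        * (2 * Complex.cosh ((τ + lam) / 2) / Complex.tanh (lam / 2)) = 0 := by
  have hs : sinh (lam / 2) ≠ 0 := fun h => by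
    obtain ⟨k, hk⟩ := sinh_eq_zero_iff.mp h
    exact hlam ⟨2 * k, by push_cast; linear_combination 2 * hk⟩
  rw [tanh_eq_sinh_div_cosh, add_div, cosh_add]
  exact markov_relation_of_sq_sub_sq_eq_one (cosh_sq_sub_sinh_sq _) (cosh_sq_sub_sinh_sq _) hs
end

section
/- Define the matrices ρ(a) = [[e₁, 2e₁⁻¹],[0, e₁⁻¹]] and ρ(b) = (1/(√t₁ (e₁²-1))) · [[(e₁²+1)t₁ + 2, -2(t₁+1)],[-e₁²+1, e₁²-1]] for e₁ ∈ ℂ \ {0, ±1, ±√-1} and t₁ ∈ ℂ*. Then the commutator ρ(a)ρ(b)ρ(a)⁻¹ρ(b)⁻¹ has trace -2, i.e. is parabolic (as a PSL(2,ℂ) element). -/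
/-! Both matrices lie in `SL(2)`, so by the Fricke identity the trace of their commutator is
`x² + y² + z² - x y z - 2` for the traces `x = tr A`, `y = tr B`, `z = tr AB`. Here
`x = (e² + 1)/e`, `y = (e² + 1)(t + 1)/(s(e² - 1))`, `z = (e² + 1)(e²t + 1)/(e s (e² - 1))`,
and with `s² = t` this triple satisfies the Markoff-type equation `x² + y² + z² = x y z`. -/

open Matrix

theorem Matrix.trace_mul_mul_inv_mul_inv_fin_two {R : Type*} [CommRing R]
    (A B : Matrix (Fin 2) (Fin 2) R) (hA : A.det = 1) (hB : B.det = 1) :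
    trace (A * B * A⁻¹ * B⁻¹) =
      trace A ^ 2 + trace B ^ 2 + trace (A * B) ^ 2 - trace A * trace B * trace (A * B) - 2 := by
  rw [inv_def, inv_def, hA, hB, Ring.inverse_one, one_smul, one_smul]
  rw [det_fin_two] at hA hB
  simp only [adjugate_fin_two, trace_fin_two, mul_apply, Fin.sum_univ_two, of_apply, cons_val',
    cons_val_fin_one, cons_val_zero, cons_val_one, mul_neg]
  linear_combination ((B 0 0 + B 1 1) ^ 2 - 2 * (B 0 0 * B 1 1 - B 0 1 * B 1 0)) * hA +
    ((A 0 0 + A 1 1) ^ 2 - 2) * hB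

section

variable {K : Type*} [Field K]

def rhoA (e : K) : Matrix (Fin 2) (Fin 2) K := !![e, 2 * e⁻¹; 0, e⁻¹]

def rhoB (e t s : K) : Matrix (Fin 2) (Fin 2) K :=
  (1 / (s * (e ^ 2 - 1))) • !![(e ^ 2 + 1) * t + 2, -2 * (t + 1); -e ^ 2 + 1, e ^ 2 - 1]

theorem det_rhoA {e : K} (he : e ≠ 0) : (rhoA e).det = 1 := by
  rw [rhoA, det_fin_two_of]
  field_simp
  ring

theorem det_rhoB {e t s : K} (he : e ^ 2 ≠ 1) (hs0 : s ≠ 0) (hs : s ^ 2 = t) :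
    (rhoB e t s).det = 1 := by
  have he' : e ^ 2 - 1 ≠ 0 := sub_ne_zero.mpr he
  rw [rhoB, det_smul, det_fin_two_of, Fintype.card_fin, ← hs]
  field_simp
  ring

theorem trace_rhoA (e : K) : trace (rhoA e) = e + e⁻¹ := by
  simp [rhoA, trace_fin_two_of]

theorem trace_rhoB (e t s : K) :
    trace (rhoB e t s) = (e ^ 2 + 1) * (t + 1) / (s * (e ^ 2 - 1)) := by
  rw [rhoB, trace_smul, trace_fin_two_of, smul_eq_mul]
  ring

theorem trace_rhoA_mul_rhoB {e : K} (he : e ≠ 0) (t s : K) :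
    trace (rhoA e * rhoB e t s) = (e ^ 2 + 1) * (e ^ 2 * t + 1) / (e * s * (e ^ 2 - 1)) := by
  rw [rhoA, rhoB, Matrix.mul_smul, trace_smul, mul_fin_two, trace_fin_two_of, smul_eq_mul]
  field_simp
  ring

end

theorem commutator_trace_eq_neg_two_general
    (e₁ t₁ s : ℂ)
    (he0 : e₁ ≠ 0) (he1 : e₁ ≠ 1) (hem1 : e₁ ≠ -1)
    (ht : t₁ ≠ 0) (hs : s ^ 2 = t₁)
    (A B : Matrix (Fin 2) (Fin 2) ℂ)
    (hA : A = !![e₁, 2 * e₁⁻¹; 0, e₁⁻¹])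
    (hB : B = (1 / (s * (e₁ ^ 2 - 1))) •
        !![(e₁ ^ 2 + 1) * t₁ + 2, -2 * (t₁ + 1); -e₁ ^ 2 + 1, e₁ ^ 2 - 1]) :
    Matrix.trace (A * B * A⁻¹ * B⁻¹) = -2 := by
  have hs0 : s ≠ 0 := by rintro rfl; exact ht (by simp [← hs])
  have he2 : e₁ ^ 2 ≠ 1 := by simp [he1, hem1]
  change A = rhoA e₁ at hA
  change B = rhoB e₁ t₁ s at hB
  subst hA hB
  rw [trace_mul_mul_inv_mul_inv_fin_two _ _ (det_rhoA he0) (det_rhoB he2 hs0 hs), trace_rhoA,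
    trace_rhoB, trace_rhoA_mul_rhoB he0]
  have he2' : e₁ ^ 2 - 1 ≠ 0 := sub_ne_zero.mpr he2
  subst hs
  field_simp
  ring

theorem commutator_trace_eq_neg_two
    (e₁ t₁ s : ℂ)
    (he0 : e₁ ≠ 0) (he1 : e₁ ≠ 1) (hem1 : e₁ ≠ -1)
    (hei : e₁ ≠ Complex.I) (hemi : e₁ ≠ -Complex.I)
    (ht : t₁ ≠ 0) (hs : s ^ 2 = t₁)
    (A B : Matrix (Fin 2) (Fin 2) ℂ)
    (hA : A = !![e₁, 2 * e₁⁻¹; 0, e₁⁻¹])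
    (hB : B = (1 / (s * (e₁ ^ 2 - 1))) •
        !![(e₁ ^ 2 + 1) * t₁ + 2, -2 * (t₁ + 1); -e₁ ^ 2 + 1, e₁ ^ 2 - 1]) :
    Matrix.trace (A * B * A⁻¹ * B⁻¹) = -2 :=
  commutator_trace_eq_neg_two_general e₁ t₁ s he0 he1 hem1 ht hs A B hA hB
end

section
/- Suppose a family of functions fₙ: ℂ² → ℂ indexed by rationals p/q (q ≥ 0, gcd(p,q)=1) satisfies: f_{1/0}(λ,τ) = 2cosh(λ/2), f_{n/1}(λ,τ) = 2cosh((τ+nλ)/2)/tanh(λ/2), and the recursion f_{(p+r)/(q+s)} = f_{p/q}·f_{r/s} - f_{(p-r)/(q-s)} for Farey neighbors p/q < r/s with q,s > 0. Then each f_{p/q} has the form f_{p/q}(λ,τ) = Σ_{k=-q}^{q} c_{p/q,k}(λ) exp(kτ/2), where the coefficient functions c_{p/q,k} are holomorphic in λ (on Re λ > 0), are real for real λ = l > 0, and the extreme coefficients c_{p/q,±q}(l) are nonzero for l > 0; moreover c_{(p+r)/(q+s),±(q+s)} = c_{p/q,±q}·c_{r/s,±s}. -/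
/-!
Write `f_{p/q}` as a Laurent polynomial in `T = exp (τ / 2)` whose coefficients lie in the ring
`𝒜` of functions of `λ` that are holomorphic on `Re λ > 0` and real on `(0, ∞)`. The traces
`f_{n/1}` have width one, with extreme coefficients `exp (±nλ/2) / tanh (λ/2)`. Every `p/q` with
`q ≥ 2` is the Farey sum of neighbours `p₁/q₁ < p₂/q₂` of smaller denominator, and in
`f_{p/q} = f_{p₁/q₁} f_{p₂/q₂} - f_{(p₁-p₂)/(q₁-q₂)}` the subtracted trace has width
`|q₁ - q₂| < q` (using `f (-p) (-q) = f p q` and `f 1 0 = 2 cosh (λ/2)`). So by induction on `q`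
the extreme coefficients multiply: `c_{p/q,±q} = exp (±pλ/2) / tanh (λ/2) ^ q`, nonzero for
`λ > 0`.
-/

open Complex LaurentPolynomial

theorem Int.gcd_eq_one_of_mul_sub_mul {p q r s : ℤ}
    (h : p * s - q * r = -1 ∨ p * s - q * r = 1) : Int.gcd p q = 1 := by
  refine Int.isCoprime_iff_gcd_eq_one.mp ?_
  rcases h with h | h
  exacts [⟨-s, r, by linear_combination -h⟩, ⟨s, -r, by linear_combination h⟩]

theorem Int.cast_div_lt_cast_div_of_mul_sub_mul_neg {p q r s : ℤ} (hq : 0 < q) (hs : 0 < s)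
    (h : p * s - q * r < 0) : (p : ℚ) / q < r / s := by
  rw [div_lt_div_iff₀ (by exact_mod_cast hq) (by exact_mod_cast hs)]
  exact_mod_cast (by linarith : p * s < r * q)

theorem Int.exists_farey_parents {p q : ℤ} (hq : 2 ≤ q) (hpq : Int.gcd p q = 1) :
    ∃ p₁ q₁ p₂ q₂ : ℤ, 0 < q₁ ∧ 0 < q₂ ∧ p₁ * q₂ - q₁ * p₂ = -1 ∧ p = p₁ + p₂ ∧ q = q₁ + q₂ := by
  obtain ⟨u, v, huv⟩ := Int.isCoprime_iff_gcd_eq_one.mpr hpq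
  have hdvd : q ∣ p * (u % q) - 1 :=
    ⟨-(v + p * (u / q)), by rw [Int.emod_def]; linear_combination huv⟩
  have hq₁ : 0 < u % q := by
    refine lt_of_le_of_ne (Int.emod_nonneg u (by omega)) fun h => ?_
    rw [← h, mul_zero, zero_sub, dvd_neg] at hdvd
    have := Int.le_of_dvd one_pos hdvd
    omega
  have hq₂ := Int.emod_lt_of_pos u (by omega : 0 < q)
  obtain ⟨p₁, hp₁⟩ := hdvd
  exact ⟨p₁, u % q, p - p₁, q - u % q, hq₁, by omega, by linear_combination -hp₁, by ring, by ring⟩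

theorem Complex.sinh_ne_zero_of_re_ne_zero {z : ℂ} (h : z.re ≠ 0) : sinh z ≠ 0 := by
  intro hz
  rw [sinh, div_eq_zero_iff, sub_eq_zero] at hz
  have := congrArg norm (hz.resolve_right two_ne_zero)
  rw [norm_exp, norm_exp, Real.exp_eq_exp, neg_re] at this
  exact h (by linarith)

theorem Complex.cosh_ne_zero_of_re_ne_zero {z : ℂ} (h : z.re ≠ 0) : cosh z ≠ 0 := by
  intro hz
  rw [cosh, div_eq_zero_iff, add_eq_zero_iff_eq_neg] at hz
  have := congrArg norm (hz.resolve_right two_ne_zero)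
  rw [norm_neg, norm_exp, norm_exp, Real.exp_eq_exp, neg_re] at this
  exact h (by linarith)

theorem Complex.tanh_ne_zero_of_re_ne_zero {z : ℂ} (h : z.re ≠ 0) : tanh z ≠ 0 :=
  div_ne_zero (sinh_ne_zero_of_re_ne_zero h) (cosh_ne_zero_of_re_ne_zero h)

theorem Complex.differentiableAt_tanh {z : ℂ} (h : cosh z ≠ 0) : DifferentiableAt ℂ tanh z :=
  (differentiableAt_sinh.div differentiableAt_cosh h).congr_of_eventuallyEq
    (Filter.Eventually.of_forall fun w => tanh_eq_sinh_div_cosh w)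

namespace LaurentPolynomial
variable {R : Type*} [Semiring R]

theorem coeff_mul_add_of_le {P Q : R[T;T⁻¹]} {n n' : ℤ}
    (hP : ∀ k ∈ P.coeff.support, k ≤ n) (hQ : ∀ k ∈ Q.coeff.support, k ≤ n') :
    (P * Q).coeff (n + n') = P.coeff n * Q.coeff n' :=
  AddMonoidAlgebra.coeff_mul_add_of_uniqueAdd fun a b ha hb hab => by
    have := hP a ha; have := hQ b hb; omega

theorem coeff_mul_add_of_ge {P Q : R[T;T⁻¹]} {m m' : ℤ}
    (hP : ∀ k ∈ P.coeff.support, m ≤ k) (hQ : ∀ k ∈ Q.coeff.support, m' ≤ k) :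
    (P * Q).coeff (m + m') = P.coeff m * Q.coeff m' :=
  AddMonoidAlgebra.coeff_mul_add_of_uniqueAdd fun a b ha hb hab => by
    have := hP a ha; have := hQ b hb; omega

end LaurentPolynomial

def rightHalfPlaneCoeffs : Subring (ℂ → ℂ) where
  carrier := {c | DifferentiableOn ℂ c {z | 0 < z.re} ∧ ∀ l : ℝ, 0 < l → (c l).im = 0}
  mul_mem' ha hb := ⟨ha.1.mul hb.1, fun l hl => by simp [ha.2 l hl, hb.2 l hl]⟩
  one_mem' := ⟨differentiableOn_const 1, fun _ _ => by simp⟩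
  add_mem' ha hb := ⟨ha.1.add hb.1, fun l hl => by simp [ha.2 l hl, hb.2 l hl]⟩
  zero_mem' := ⟨differentiableOn_const 0, fun _ _ => by simp⟩
  neg_mem' ha := ⟨ha.1.neg, fun l hl => by simp [ha.2 l hl]⟩

local notation "𝒜" => rightHalfPlaneCoeffs

noncomputable def evalAt (lam τ : ℂ) : 𝒜[T;T⁻¹] →+* ℂ :=
  eval₂ ((Pi.evalRingHom (fun _ => ℂ) lam).comp (Subring.subtype 𝒜))
    (Units.mk0 (exp (τ / 2)) (exp_ne_zero _))

theorem evalAt_single (lam τ : ℂ) (k : ℤ) (c : 𝒜) :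
    evalAt lam τ (.single k c) = (c : ℂ → ℂ) lam * exp (k * τ / 2) := by
  rw [single_eq_C_mul_T, evalAt, eval₂_C_mul_T, Units.val_zpow_eq_zpow_val, Units.val_mk0,
    ← exp_int_mul]
  simp [mul_div_assoc]

theorem evalAt_eq_finsuppSum (lam τ : ℂ) (P : 𝒜[T;T⁻¹]) :
    evalAt lam τ P = P.coeff.sum fun k c => (c : ℂ → ℂ) lam * exp (k * τ / 2) := by
  induction P using AddMonoidAlgebra.induction_linear with
  | zero => simp
  | add P Q hP hQ =>
    rw [map_add, hP, hQ, AddMonoidAlgebra.coeff_add, Finsupp.sum_add_index']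
    · simp
    · intros; simp [add_mul]
  | single k c =>
    rw [evalAt_single, AddMonoidAlgebra.coeff_single, Finsupp.sum_single_index]; simp

theorem evalAt_eq_sum (lam τ : ℂ) {P : 𝒜[T;T⁻¹]} {s : Finset ℤ}
    (hs : P.coeff.support ⊆ s) :
    evalAt lam τ P = ∑ k ∈ s, (P.coeff k : ℂ → ℂ) lam * exp (k * τ / 2) := by
  rw [evalAt_eq_finsuppSum, Finsupp.sum_of_support_subset _ hs]
  simp

noncomputable def extremeCoeff (p q : ℤ) (lam : ℂ) : ℂ :=
  exp (p * lam / 2) / tanh (lam / 2) ^ q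

-- `q + s ≠ 0` excludes `0 ^ q * 0 ^ (-q) ≠ 0 ^ 0` at the zeros of `tanh (λ / 2)`.
theorem extremeCoeff_mul {p q r s : ℤ} (hqs : q + s ≠ 0) :
    extremeCoeff p q * extremeCoeff r s = extremeCoeff (p + r) (q + s) := by
  ext lam
  simp only [Pi.mul_apply, extremeCoeff, div_mul_div_comm, ← exp_add,
    zpow_add' (Or.inr (Or.inl hqs))]
  push_cast; ring_nf

theorem extremeCoeff_ofReal_ne_zero (p q : ℤ) {l : ℝ} (hl : 0 < l) : extremeCoeff p q l ≠ 0 :=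
  div_ne_zero (exp_ne_zero _) <| zpow_ne_zero _ <| tanh_ne_zero_of_re_ne_zero <| by
    rw [div_ofNat_re, ofReal_re]; positivity

theorem extremeCoeff_ofReal_im (p q : ℤ) (l : ℝ) : (extremeCoeff p q l).im = 0 := by
  rw [extremeCoeff, ← ofReal_intCast, ← ofReal_mul, ← ofReal_ofNat, ← ofReal_div, ← ofReal_div,
    ← ofReal_exp, ← ofReal_tanh, ← ofReal_zpow, ← ofReal_div, ofReal_im]

theorem differentiableOn_extremeCoeff (p q : ℤ) :
    DifferentiableOn ℂ (extremeCoeff p q) {z | 0 < z.re} := by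
  intro lam hlam
  have hre : (lam / 2).re ≠ 0 := by rw [div_ofNat_re]; exact (half_pos hlam).ne'
  have htanh : DifferentiableAt ℂ (fun z : ℂ => tanh (z / 2)) lam :=
    (differentiableAt_tanh (cosh_ne_zero_of_re_ne_zero hre)).comp (f := fun z : ℂ => z / 2) lam
      (by fun_prop)
  have hne := tanh_ne_zero_of_re_ne_zero hre
  exact (DifferentiableAt.div (c := fun z : ℂ => exp (p * z / 2)) (by fun_prop)
    (htanh.zpow (Or.inl hne)) (zpow_ne_zero _ hne)).differentiableWithinAt

theorem extremeCoeff_mem (p q : ℤ) : extremeCoeff p q ∈ 𝒜 :=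
  ⟨differentiableOn_extremeCoeff p q, fun l _ => extremeCoeff_ofReal_im p q l⟩

structure IsLaurentForm (g : ℂ → ℂ → ℂ) (m : ℤ) (P : 𝒜[T;T⁻¹]) : Prop where
  eval_eq : ∀ lam τ, g lam τ = evalAt lam τ P
  support_subset : P.coeff.support ⊆ Finset.Icc (-m) m

def HasExtremalLaurentForm (g : ℂ → ℂ → ℂ) (p q : ℤ) : Prop :=
  ∃ P : 𝒜[T;T⁻¹], IsLaurentForm g q P ∧
    ((P.coeff q : 𝒜) : ℂ → ℂ) = extremeCoeff p q ∧
    ((P.coeff (-q) : 𝒜) : ℂ → ℂ) = extremeCoeff (-p) q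

namespace IsLaurentForm

variable {g g₁ g₂ g₃ : ℂ → ℂ → ℂ} {m m' q₁ q₂ : ℤ} {P P₁ P₂ P₃ : 𝒜[T;T⁻¹]}

theorem mono (h : IsLaurentForm g m P) (hm : m ≤ m') : IsLaurentForm g m' P :=
  ⟨h.eval_eq, h.support_subset.trans (Finset.Icc_subset_Icc (by omega) hm)⟩

theorem neg_le_and_le_of_mem_support (h : IsLaurentForm g m P) {k : ℤ} (hk : k ∈ P.coeff.support) :
    -m ≤ k ∧ k ≤ m :=
  Finset.mem_Icc.mp (h.support_subset hk)

theorem mul_sub (h₁ : IsLaurentForm g₁ q₁ P₁) (h₂ : IsLaurentForm g₂ q₂ P₂)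
    (h₃ : IsLaurentForm g₃ (q₁ + q₂) P₃)
    (hg : ∀ lam τ, g lam τ = g₁ lam τ * g₂ lam τ - g₃ lam τ) :
    IsLaurentForm g (q₁ + q₂) (P₁ * P₂ - P₃) := by
  refine ⟨fun lam τ => by rw [hg, h₁.eval_eq, h₂.eval_eq, h₃.eval_eq, map_sub, map_mul], ?_⟩
  classical
  rw [AddMonoidAlgebra.coeff_sub]
  refine Finsupp.support_sub.trans (Finset.union_subset ?_ h₃.support_subset)
  refine (AddMonoidAlgebra.support_coeff_mul_subset P₁ P₂).trans ?_
  refine (Finset.add_subset_add h₁.support_subset h₂.support_subset).trans ?_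
  exact (Finset.Icc_add_Icc_subset _ _ _ _).trans (by rw [neg_add])

theorem coeff_mul_sub_top (h₁ : IsLaurentForm g₁ q₁ P₁) (h₂ : IsLaurentForm g₂ q₂ P₂)
    (h₃ : IsLaurentForm g₃ (q₁ + q₂ - 1) P₃) :
    (P₁ * P₂ - P₃).coeff (q₁ + q₂) = P₁.coeff q₁ * P₂.coeff q₂ := by
  have hP₃ : P₃.coeff (q₁ + q₂) = 0 :=
    Finsupp.notMem_support_iff.mp fun h => by have := h₃.neg_le_and_le_of_mem_support h; omega
  rw [AddMonoidAlgebra.coeff_sub, Finsupp.sub_apply, hP₃, sub_zero,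
    coeff_mul_add_of_le (fun k hk => (h₁.neg_le_and_le_of_mem_support hk).2)
      (fun k hk => (h₂.neg_le_and_le_of_mem_support hk).2)]

theorem coeff_mul_sub_bot (h₁ : IsLaurentForm g₁ q₁ P₁) (h₂ : IsLaurentForm g₂ q₂ P₂)
    (h₃ : IsLaurentForm g₃ (q₁ + q₂ - 1) P₃) :
    (P₁ * P₂ - P₃).coeff (-(q₁ + q₂)) = P₁.coeff (-q₁) * P₂.coeff (-q₂) := by
  have hP₃ : P₃.coeff (-(q₁ + q₂)) = 0 :=
    Finsupp.notMem_support_iff.mp fun h => by have := h₃.neg_le_and_le_of_mem_support h; omega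
  rw [AddMonoidAlgebra.coeff_sub, Finsupp.sub_apply, hP₃, sub_zero, neg_add,
    coeff_mul_add_of_ge (fun k hk => (h₁.neg_le_and_le_of_mem_support hk).1)
      (fun k hk => (h₂.neg_le_and_le_of_mem_support hk).1)]

end IsLaurentForm

theorem HasExtremalLaurentForm.mul_sub {g g₁ g₂ g₃ : ℂ → ℂ → ℂ} {p₁ q₁ p₂ q₂ : ℤ}
    (hq : q₁ + q₂ ≠ 0) (h₁ : HasExtremalLaurentForm g₁ p₁ q₁)
    (h₂ : HasExtremalLaurentForm g₂ p₂ q₂) (h₃ : ∃ P, IsLaurentForm g₃ (q₁ + q₂ - 1) P)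
    (hg : ∀ lam τ, g lam τ = g₁ lam τ * g₂ lam τ - g₃ lam τ) :
    HasExtremalLaurentForm g (p₁ + p₂) (q₁ + q₂) := by
  obtain ⟨P₁, hP₁, htop₁, hbot₁⟩ := h₁
  obtain ⟨P₂, hP₂, htop₂, hbot₂⟩ := h₂
  obtain ⟨P₃, hP₃⟩ := h₃
  refine ⟨P₁ * P₂ - P₃, hP₁.mul_sub hP₂ (hP₃.mono (by omega)) hg, ?_, ?_⟩
  · rw [hP₁.coeff_mul_sub_top hP₂ hP₃, Subring.coe_mul, htop₁, htop₂, extremeCoeff_mul hq]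
  · rw [hP₁.coeff_mul_sub_bot hP₂ hP₃, Subring.coe_mul, hbot₁, hbot₂, extremeCoeff_mul hq,
      neg_add]

theorem hasExtremalLaurentForm_of_eq_cosh_div_tanh {g : ℂ → ℂ → ℂ} (n : ℤ)
    (hg : ∀ lam τ, g lam τ = 2 * cosh ((τ + n * lam) / 2) / tanh (lam / 2)) :
    HasExtremalLaurentForm g n 1 := by
  classical
  refine ⟨.single 1 ⟨_, extremeCoeff_mem n 1⟩ + .single (-1) ⟨_, extremeCoeff_mem (-n) 1⟩,
    ⟨fun lam τ => ?_, ?_⟩, ?_, ?_⟩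
  · rw [hg, map_add, evalAt_single, evalAt_single, cosh]
    simp only [extremeCoeff, zpow_one, Int.cast_one, Int.cast_neg]
    ring_nf
    simp only [exp_add]
    ring
  · refine Finsupp.support_add.trans (Finset.union_subset ?_ ?_) <;>
      exact Finsupp.support_single_subset.trans (by simp)
  all_goals simp [-single_eq_C_mul_T]

theorem exists_laurentForm_zero_of_eq_two_cosh {g : ℂ → ℂ → ℂ}
    (hg : ∀ lam τ, g lam τ = 2 * cosh (lam / 2)) :
    ∃ P, IsLaurentForm g 0 P := by
  have hmem : (fun lam : ℂ => 2 * cosh (lam / 2)) ∈ 𝒜 :=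
    ⟨(by fun_prop : Differentiable ℂ fun lam : ℂ => 2 * cosh (lam / 2)).differentiableOn,
      fun l _ => by
        simp only [← ofReal_ofNat, ← ofReal_div, ← ofReal_cosh, ← ofReal_mul, ofReal_im]⟩
  refine ⟨.single 0 ⟨_, hmem⟩, fun lam τ => ?_, Finsupp.support_single_subset.trans (by simp)⟩
  rw [hg, evalAt_single]
  simp

theorem exists_laurentForm_of_abs_le {f : ℤ → ℤ → ℂ → ℂ → ℂ}
    (hsym : ∀ p q : ℤ, f (-p) (-q) = f p q)
    (h10 : ∀ lam τ : ℂ, f 1 0 lam τ = 2 * cosh (lam / 2)) {m : ℤ}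
    (hf : ∀ p q, 0 < q → q ≤ m → Int.gcd p q = 1 → ∃ P, IsLaurentForm (f p q) q P)
    {a b : ℤ} (hab : Int.gcd a b = 1) (hb : |b| ≤ m) : ∃ P, IsLaurentForm (f a b) m P := by
  obtain ⟨hb₁, hb₂⟩ := abs_le.mp hb
  rcases lt_trichotomy b 0 with hb₀ | rfl | hb₀
  · obtain ⟨P, hP⟩ := hf (-a) (-b) (by omega) (by omega) (by rwa [Int.gcd_neg, Int.neg_gcd])
    exact ⟨P, hsym a b ▸ hP.mono (by omega)⟩
  · have ha : a = 1 ∨ a = -1 := by rw [Int.gcd_zero_right] at hab; omega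
    have hf10 : f a 0 = f 1 0 := by rcases ha with rfl | rfl; rfl; exact hsym 1 0
    obtain ⟨P, hP⟩ := exists_laurentForm_zero_of_eq_two_cosh (hf10 ▸ h10)
    exact ⟨P, hP.mono (by omega)⟩
  · obtain ⟨P, hP⟩ := hf a b hb₀ hb₂ hab
    exact ⟨P, hP.mono hb₂⟩

theorem hasExtremalLaurentForm_of_farey_recursion (f : ℤ → ℤ → ℂ → ℂ → ℂ)
    (hsym : ∀ p q : ℤ, f (-p) (-q) = f p q)
    (h10 : ∀ lam τ : ℂ, f 1 0 lam τ = 2 * cosh (lam / 2))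
    (hn1 : ∀ n : ℤ, ∀ lam τ : ℂ, f n 1 lam τ = 2 * cosh ((τ + n * lam) / 2) / tanh (lam / 2))
    (hrec : ∀ p q r s : ℤ, 0 < q → 0 < s → Int.gcd p q = 1 → Int.gcd r s = 1 →
      (p * s - q * r = -1 ∨ p * s - q * r = 1) → (p : ℚ) / q < (r : ℚ) / s →
      ∀ lam τ : ℂ, f (p + r) (q + s) lam τ = f p q lam τ * f r s lam τ - f (p - r) (q - s) lam τ)
    (p q : ℤ) (hq : 0 < q) (hpq : Int.gcd p q = 1) : HasExtremalLaurentForm (f p q) p q := by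
  induction hn : q.toNat using Nat.strong_induction_on generalizing p q with
  | _ n ih =>
  have ih' : ∀ p' q', 0 < q' → q' < q → Int.gcd p' q' = 1 →
      HasExtremalLaurentForm (f p' q') p' q' :=
    fun p' q' hq' hlt h => ih q'.toNat (by omega) p' q' hq' h rfl
  obtain rfl | hq_two : q = 1 ∨ 2 ≤ q := by omega
  · exact hasExtremalLaurentForm_of_eq_cosh_div_tanh p (hn1 p)
  obtain ⟨p₁, q₁, p₂, q₂, hq₁, hq₂, hdet, rfl, rfl⟩ := Int.exists_farey_parents hq_two hpq
  have hgcd₁ : Int.gcd p₁ q₁ = 1 := Int.gcd_eq_one_of_mul_sub_mul (Or.inl hdet)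
  have hgcd₂ : Int.gcd p₂ q₂ = 1 :=
    Int.gcd_eq_one_of_mul_sub_mul (r := p₁) (s := q₁) (Or.inr (by linear_combination -hdet))
  have hlower : ∃ P, IsLaurentForm (f (p₁ - p₂) (q₁ - q₂)) (q₁ + q₂ - 1) P :=
    exists_laurentForm_of_abs_le hsym h10
      (fun p' q' hq' hle h => (ih' p' q' hq' (by omega) h).imp fun _ hP => hP.1)
      (Int.gcd_eq_one_of_mul_sub_mul (r := p₂) (s := q₂) (Or.inl (by linear_combination hdet)))
      (abs_le.mpr ⟨by omega, by omega⟩)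
  exact (ih' p₁ q₁ hq₁ (by omega) hgcd₁).mul_sub (by omega) (ih' p₂ q₂ hq₂ (by omega) hgcd₂) hlower
    (hrec p₁ q₁ p₂ q₂ hq₁ hq₂ hgcd₁ hgcd₂ (Or.inl hdet)
      (Int.cast_div_lt_cast_div_of_mul_sub_mul_neg hq₁ hq₂ (by omega)))

theorem trace_functions_laurent_form
    (f : ℤ → ℤ → ℂ → ℂ → ℂ)
    (hsym : ∀ p q : ℤ, f (-p) (-q) = f p q)
    (h10 : ∀ lam τ : ℂ, f 1 0 lam τ = 2 * Complex.cosh (lam / 2))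
    (hn1 : ∀ n : ℤ, ∀ lam τ : ℂ,
      f n 1 lam τ = 2 * Complex.cosh ((τ + n * lam) / 2) / Complex.tanh (lam / 2))
    (hrec : ∀ p q r s : ℤ, 0 < q → 0 < s →
      Int.gcd p q = 1 → Int.gcd r s = 1 →
      (p * s - q * r = -1 ∨ p * s - q * r = 1) → (p : ℚ) / q < (r : ℚ) / s →
      ∀ lam τ : ℂ,
        f (p + r) (q + s) lam τ = f p q lam τ * f r s lam τ - f (p - r) (q - s) lam τ) :
    ∃ c : ℤ → ℤ → ℤ → ℂ → ℂ,
      ∀ p q : ℤ, 1 ≤ q → Int.gcd p q = 1 →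
        (∀ lam τ : ℂ,
          f p q lam τ = ∑ k ∈ Finset.Icc (-q) q, c p q k lam * Complex.exp (k * τ / 2)) ∧
        (∀ k : ℤ, DifferentiableOn ℂ (c p q k) {z : ℂ | 0 < z.re}) ∧
        (∀ k : ℤ, ∀ l : ℝ, 0 < l → (c p q k l).im = 0) ∧
        (∀ l : ℝ, 0 < l → c p q q (l : ℂ) ≠ 0 ∧ c p q (-q) (l : ℂ) ≠ 0) ∧
        (∀ r s : ℤ, 0 < s → Int.gcd r s = 1 →
          (p * s - q * r = -1 ∨ p * s - q * r = 1) → (p : ℚ) / q < (r : ℚ) / s →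
          (∀ lam : ℂ, c (p + r) (q + s) (q + s) lam = c p q q lam * c r s s lam) ∧
          (∀ lam : ℂ, c (p + r) (q + s) (-(q + s)) lam = c p q (-q) lam * c r s (-s) lam)) := by
  choose! P hP using hasExtremalLaurentForm_of_farey_recursion f hsym h10 hn1 hrec
  refine ⟨fun p q k => (P p q).coeff k, fun p q hq hpq => ?_⟩
  obtain ⟨hform, htop, hbot⟩ := hP p q hq hpq
  refine ⟨fun lam τ => (hform.eval_eq lam τ).trans (evalAt_eq_sum lam τ hform.support_subset),
    fun k => ((P p q).coeff k).2.1, fun k => ((P p q).coeff k).2.2,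
    fun l hl => ?_, fun r s hs hrs hdet _ => ?_⟩
  · dsimp only
    rw [htop, hbot]
    exact ⟨extremeCoeff_ofReal_ne_zero p q hl, extremeCoeff_ofReal_ne_zero (-p) q hl⟩
  obtain ⟨-, htop', hbot'⟩ := hP r s hs hrs
  obtain ⟨-, htop'', hbot''⟩ := hP (p + r) (q + s) (by omega)
    (Int.gcd_eq_one_of_mul_sub_mul (r := r) (s := s)
      (by rwa [show (p + r) * s - (q + s) * r = p * s - q * r by ring]))
  refine ⟨fun lam => ?_, fun lam => ?_⟩
  · dsimp only
    rw [htop'', htop, htop', ← Pi.mul_apply, extremeCoeff_mul (by omega)]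
  · dsimp only
    rw [hbot'', hbot, hbot', ← Pi.mul_apply, extremeCoeff_mul (by omega), neg_add]
end

section
/- Fix l > 0 and a rational p/q with q ≥ 1, and let tr_{p/q}(l, τ) = Σ_{k=-q}^{q} c_k exp(kτ/2) with real coefficients c_k and c_{±q} ≠ 0. Then there exists T > 0 such that for all real t with |t| > T and every integer j with |j| < q/2, there exists b ∈ ((2j-1)π/q, (2j+1)π/q) with Im(tr_{p/q}(l, t + b√-1)) = 0. -/
open Complex Finset

/-!
On the line `Re τ = t`, the imaginary part of `Σ c_k exp(kτ/2)` is the trigonometric sum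
`b ↦ Σ c_k e^{kt/2} sin(kb/2)`. For `|t|` large the extreme term `k = q` (if `t > 0`) or
`k = -q` (if `t < 0`) exceeds all the others together by a factor of order `e^{|t|/2}`, so the
sum has the sign of `± sin(qb/2)` at the points `b = (2j ± 1)π/q`, where that sine is `±1`
with opposite signs; the intermediate value theorem gives a zero in between.
-/

noncomputable def trigSum (s : Finset ℤ) (c : ℤ → ℝ) (t b : ℝ) : ℝ :=
  ∑ k ∈ s, c k * Real.exp (k * t / 2) * Real.sin (k * b / 2)

lemma im_sum_mul_exp (s : Finset ℤ) (c : ℤ → ℝ) (t b : ℝ) :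
    (∑ k ∈ s, (c k : ℂ) * exp (k * (t + b * I) / 2)).im = trigSum s c t b := by
  rw [im_sum]
  refine sum_congr rfl fun k _ => ?_
  rw [show (k : ℂ) * (t + b * I) / 2 = ↑((k : ℝ) * t / 2) + ↑((k : ℝ) * b / 2) * I by
    push_cast; ring, im_ofReal_mul, exp_im]
  simp only [add_re, add_im, ofReal_re, ofReal_im, mul_re, mul_im, I_re, I_im]
  ring_nf

lemma continuous_trigSum (s : Finset ℤ) (c : ℤ → ℝ) (t : ℝ) : Continuous (trigSum s c t) :=
  continuous_finsetSum _ fun _ _ => by fun_prop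

lemma mul_pos_of_abs_sub_lt_abs {x y : ℝ} (h : |x - y| < |y|) : 0 < x * y := by
  have hy : |(x - y) * y| < y * y := by
    rw [abs_mul, ← abs_mul_abs_self y]
    exact mul_lt_mul_of_pos_right h ((abs_nonneg _).trans_lt h)
  nlinarith [neg_abs_le ((x - y) * y)]

lemma exists_mem_Ioo_eq_zero_of_abs_sub_lt {g : ℝ → ℝ} (hg : Continuous g) {q : ℝ} (hq : 0 < q)
    (j : ℤ) {A : ℝ} (hA : ∀ b, |g b - A * Real.sin (q * b / 2)| < |A|) :
    ∃ b ∈ Set.Ioo ((2 * j - 1) * Real.pi / q) ((2 * j + 1) * Real.pi / q), g b = 0 := by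
  set D := A * Real.cos (j * Real.pi)
  have hD : |D| = |A| := by rw [abs_mul, Real.abs_cos_int_mul_pi, mul_one]
  have hsin_right : Real.sin (q * ((2 * j + 1) * Real.pi / q) / 2) = Real.cos (j * Real.pi) := by
    rw [← Real.sin_add_pi_div_two]; congr 1; field_simp
  have hsin_left : Real.sin (q * ((2 * j - 1) * Real.pi / q) / 2) = -Real.cos (j * Real.pi) := by
    rw [← Real.sin_sub_pi_div_two]; congr 1; field_simp
  have hright : 0 < g ((2 * j + 1) * Real.pi / q) * D := by
    refine mul_pos_of_abs_sub_lt_abs ?_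
    simpa [hD, hsin_right, D] using hA ((2 * j + 1) * Real.pi / q)
  have hleft : g ((2 * j - 1) * Real.pi / q) * D < 0 := by
    have := mul_pos_of_abs_sub_lt_abs (x := g ((2 * j - 1) * Real.pi / q)) (y := -D)
      (by simpa [hD, hsin_left, D] using hA ((2 * j - 1) * Real.pi / q))
    linarith
  have hle : (2 * j - 1) * Real.pi / q ≤ (2 * j + 1) * Real.pi / q := by
    gcongr
    linarith [Real.pi_pos]
  obtain ⟨b, hb, hgb⟩ := intermediate_value_Ioo hle (f := fun b => g b * D)
    (by fun_prop) ⟨hleft, hright⟩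
  have hD0 : D ≠ 0 := fun h => by
    have := hA 0
    rw [← hD, h, abs_zero] at this
    exact (abs_nonneg _).not_gt this
  exact ⟨b, hb, (mul_eq_zero.mp hgb).resolve_right hD0⟩

lemma abs_trigSum_sub_lt {s : Finset ℤ} {c : ℤ → ℝ} {n : ℤ} (hn : n ∈ s) {t d : ℝ}
    (hgap : ∀ k ∈ s, k ≠ n → k * t + d ≤ n * t)
    (hmass : ∑ k ∈ s, |c k| < |c n| * Real.exp (d / 2)) (b : ℝ) :
    |trigSum s c t b - c n * Real.exp (n * t / 2) * Real.sin (n * b / 2)|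
      < |c n * Real.exp (n * t / 2)| := by
  rw [trigSum, ← add_sum_erase s _ hn, add_sub_cancel_left]
  calc |∑ k ∈ s.erase n, c k * Real.exp (k * t / 2) * Real.sin (k * b / 2)|
      ≤ ∑ k ∈ s.erase n, |c k| * Real.exp ((n * t - d) / 2) := by
        refine (abs_sum_le_sum_abs _ _).trans (sum_le_sum fun k hk => ?_)
        obtain ⟨hkn, hks⟩ := mem_erase.mp hk
        rw [abs_mul, abs_mul, Real.abs_exp]
        have hexp : Real.exp (k * t / 2) ≤ Real.exp ((n * t - d) / 2) := by
          gcongr; linarith [hgap k hks hkn]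
        calc |c k| * Real.exp (k * t / 2) * |Real.sin (k * b / 2)|
            ≤ |c k| * Real.exp ((n * t - d) / 2) * 1 := by
              gcongr
              exact Real.abs_sin_le_one _
          _ = _ := mul_one _
    _ ≤ (∑ k ∈ s, |c k|) * Real.exp ((n * t - d) / 2) := by
        rw [← sum_mul]
        gcongr
        exact erase_subset n s
    _ < |c n| * Real.exp (d / 2) * Real.exp ((n * t - d) / 2) := by gcongr
    _ = |c n * Real.exp (n * t / 2)| := by
        rw [mul_assoc, ← Real.exp_add, abs_mul, Real.abs_exp]
        ring_nf

lemma exists_trigSum_eq_zero {s : Finset ℤ} {c : ℤ → ℝ} {n : ℤ} (hn : n ∈ s) (hn0 : n ≠ 0)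
    {t d : ℝ} (hgap : ∀ k ∈ s, k ≠ n → k * t + d ≤ n * t)
    (hmass : ∑ k ∈ s, |c k| < |c n| * Real.exp (d / 2)) (j : ℤ) :
    ∃ b ∈ Set.Ioo ((2 * j - 1) * Real.pi / |(n : ℝ)|) ((2 * j + 1) * Real.pi / |(n : ℝ)|),
      trigSum s c t b = 0 := by
  have hdom := abs_trigSum_sub_lt hn hgap hmass
  have hpos : 0 < |(n : ℝ)| := abs_pos.mpr (Int.cast_ne_zero.mpr hn0)
  rcases abs_choice (n : ℝ) with habs | habs
  · refine exists_mem_Ioo_eq_zero_of_abs_sub_lt (continuous_trigSum s c t) hpos j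
      (A := c n * Real.exp (n * t / 2)) fun b => ?_
    rw [habs]
    exact hdom b
  · refine exists_mem_Ioo_eq_zero_of_abs_sub_lt (continuous_trigSum s c t) hpos j
      (A := -(c n * Real.exp (n * t / 2))) fun b => ?_
    simp only [habs, abs_neg, neg_mul, neg_div, Real.sin_neg, mul_neg, neg_neg]
    exact hdom b

lemma exists_extreme_mem_Icc {q : ℤ} (hq : 0 ≤ q) (t : ℝ) : ∃ n ∈ Icc (-q) q, (n = q ∨ n = -q) ∧
    ∀ k ∈ Icc (-q) q, k ≠ n → k * t + |t| ≤ n * t := by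
  rcases le_or_gt 0 t with ht | ht
  · refine ⟨q, right_mem_Icc.mpr (by omega), .inl rfl, fun k hk hkq => ?_⟩
    have : (k : ℝ) ≤ q - 1 := by exact_mod_cast (by grind : k ≤ q - 1)
    rw [abs_of_nonneg ht]
    nlinarith
  · refine ⟨-q, left_mem_Icc.mpr (by omega), .inr rfl, fun k hk hkq => ?_⟩
    have : (-q + 1 : ℝ) ≤ k := by exact_mod_cast (by grind : -q + 1 ≤ k)
    rw [abs_of_neg ht]
    push_cast
    nlinarith

theorem real_locus_at_large_real_part_general
    (q : ℤ) (hq : 1 ≤ q)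
    (c : ℤ → ℝ) (hcq : c q ≠ 0) (hcmq : c (-q) ≠ 0)
    (F : ℂ → ℂ)
    (hF : ∀ τ : ℂ, F τ = ∑ k ∈ Finset.Icc (-q) q, (c k : ℂ) * Complex.exp (k * τ / 2)) :
    ∃ T > 0, ∀ t : ℝ, T < |t| → ∀ j : ℤ, 2 * |j| < q →
      ∃ b : ℝ, (2 * j - 1) * Real.pi / q < b ∧ b < (2 * j + 1) * Real.pi / q ∧
        (F (t + b * Complex.I)).im = 0 := by
  obtain ⟨S, hS⟩ : ∃ S, S = ∑ k ∈ Icc (-q) q, |c k| := ⟨_, rfl⟩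
  have hS0 : 0 ≤ S := hS ▸ sum_nonneg fun _ _ => abs_nonneg _
  have hm : 0 < min |c q| |c (-q)| := lt_min (abs_pos.mpr hcq) (abs_pos.mpr hcmq)
  refine ⟨2 * S / min |c q| |c (-q)| + 1, by positivity, fun t ht j _ => ?_⟩
  have hmass : S < min |c q| |c (-q)| * Real.exp (|t| / 2) := by
    rw [mul_div_assoc] at ht
    rw [← div_lt_iff₀' hm]
    linarith [Real.add_one_le_exp (|t| / 2)]
  obtain ⟨n, hn, hnq, hgap⟩ := exists_extreme_mem_Icc (zero_le_one.trans hq) t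
  have hn_abs : |n| = q := (abs_eq (by omega)).mpr hnq
  have hcn : min |c q| |c (-q)| ≤ |c n| := by
    rcases hnq with rfl | rfl
    exacts [min_le_left _ _, min_le_right _ _]
  obtain ⟨b, hb, hb0⟩ := exists_trigSum_eq_zero hn (abs_pos.mp (by omega)) hgap
    (hS ▸ hmass.trans_le (by gcongr)) j
  rw [← Int.cast_abs, hn_abs] at hb
  exact ⟨b, hb.1, hb.2, by rw [hF, im_sum_mul_exp, hb0]⟩

theorem real_locus_at_large_real_part
    (l : ℝ) (hl : 0 < l) (q : ℤ) (hq : 1 ≤ q)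
    (c : ℤ → ℝ) (hcq : c q ≠ 0) (hcmq : c (-q) ≠ 0)
    (F : ℂ → ℂ)
    (hF : ∀ τ : ℂ, F τ = ∑ k ∈ Finset.Icc (-q) q, (c k : ℂ) * Complex.exp (k * τ / 2)) :
    ∃ T > 0, ∀ t : ℝ, T < |t| → ∀ j : ℤ, 2 * |j| < q →
      ∃ b : ℝ, (2 * j - 1) * Real.pi / q < b ∧ b < (2 * j + 1) * Real.pi / q ∧
        (F (t + b * Complex.I)).im = 0 :=
  real_locus_at_large_real_part_general q hq c hcq hcmq F hF
end

section
/- For l > 0 and real b, the trace tr_{-n-1/2}(l, (n+1/2)l + b√-1) := (2/tanh²(l/2))·(cosh(l/2) + cos(b)) - 2cosh(l/2) satisfies: tr > -2 always, and tr < 2 if and only if cos(b) < tanh²(l/2) - 1/cosh(l/2); equivalently, if arccos(tanh²(l/2) - 1/cosh(l/2)) < b < π then -2 < tr < 2. -/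
/-!
Put `c = cosh (l/2) > 1` and `T = tanh² (l/2) = 1 - 1/c² ∈ (0, 1)`, so that
`tr = 2 (c + cos b) / T - 2c`. Since `c + cos b ≥ c - 1 > 0` and `1/T > 1`, the trace exceeds
`2 (c - 1) - 2c = -2`. Clearing the denominator, `tr < 2` iff `cos b < (c + 1) T - c`, and
`(c + 1) T - c = T - 1/c` because `c (1 - T) = 1/c`. Finally `cos` is strictly decreasing on
`[0, π]`, so `arccos a < b < π` forces `cos b < a`.
-/

namespace Real

theorem one_sub_tanh_sq (x : ℝ) : 1 - tanh x ^ 2 = 1 / cosh x ^ 2 := by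
  have hc : cosh x ^ 2 ≠ 0 := pow_ne_zero 2 (cosh_pos x).ne'
  rw [tanh_eq_sinh_div_cosh, div_pow, eq_div_iff hc, sub_mul, div_mul_cancel₀ _ hc, cosh_sq]
  ring

theorem tanh_sq_pos {x : ℝ} (hx : x ≠ 0) : 0 < tanh x ^ 2 := by
  rw [tanh_eq_sinh_div_cosh]
  exact sq_pos_of_ne_zero (div_ne_zero (sinh_ne_zero.2 hx) (cosh_pos x).ne')

theorem cos_lt_of_arccos_lt {a b : ℝ} (hab : arccos a < b) (hb : b ≤ π) : cos b < a := by
  rcases le_or_gt a 1 with ha | ha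
  · have ha' : -1 ≤ a := by
      by_contra! h
      rw [arccos_eq_pi.2 h.le] at hab
      exact hab.not_ge hb
    calc cos b < cos (arccos a) :=
          strictAntiOn_cos ⟨arccos_nonneg a, arccos_le_pi a⟩
            ⟨(arccos_nonneg a).trans hab.le, hb⟩ hab
      _ = a := cos_arccos ha' ha
  · exact (cos_le_one b).trans_lt ha

end Real

open Real

/-- The trace `tr_{-n-1/2}(l, (n + 1/2) l + b √-1)` in the variables `x = l/2` and `y = cos b`. -/
noncomputable def halfIntegerSlopeTrace (x y : ℝ) : ℝ :=
  2 / tanh x ^ 2 * (cosh x + y) - 2 * cosh x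

theorem neg_two_lt_halfIntegerSlopeTrace {x y : ℝ} (hx : x ≠ 0) (hy : -1 ≤ y) :
    -2 < halfIntegerSlopeTrace x y := by
  have hT := tanh_sq_pos hx
  have hc : 1 < cosh x := one_lt_cosh.2 hx
  calc -2 = 2 * (cosh x - 1) - 2 * cosh x := by ring
    _ < 2 / tanh x ^ 2 * (cosh x - 1) - 2 * cosh x := by
        gcongr
        rw [lt_div_iff₀ hT]
        nlinarith [tanh_sq_lt_one x]
    _ ≤ halfIntegerSlopeTrace x y := by
        unfold halfIntegerSlopeTrace
        gcongr
        linarith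

theorem halfIntegerSlopeTrace_lt_two_iff {x : ℝ} (hx : x ≠ 0) (y : ℝ) :
    halfIntegerSlopeTrace x y < 2 ↔ y < tanh x ^ 2 - 1 / cosh x := by
  have hT := tanh_sq_pos hx
  have hc := (cosh_pos x).ne'
  have threshold_eq : (cosh x + 1) * tanh x ^ 2 - cosh x = tanh x ^ 2 - 1 / cosh x := by
    have := one_sub_tanh_sq x
    field_simp at this ⊢
    linear_combination -this
  rw [← threshold_eq, halfIntegerSlopeTrace, sub_lt_iff_lt_add, div_mul_eq_mul_div,
    div_lt_iff₀ hT]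
  constructor <;> intro h <;> linarith

theorem half_integer_slope_trace (l b : ℝ) (hl : 0 < l)
    (tr : ℝ)
    (htr : tr = (2 / Real.tanh (l / 2) ^ 2) * (Real.cosh (l / 2) + Real.cos b)
        - 2 * Real.cosh (l / 2)) :
    -2 < tr ∧
    (tr < 2 ↔ Real.cos b < Real.tanh (l / 2) ^ 2 - 1 / Real.cosh (l / 2)) ∧
    ((Real.arccos (Real.tanh (l / 2) ^ 2 - 1 / Real.cosh (l / 2)) < b ∧ b < Real.pi) →
      -2 < tr ∧ tr < 2) := by
  have hx : l / 2 ≠ 0 := by positivity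
  have htr' : tr = halfIntegerSlopeTrace (l / 2) (cos b) := htr
  have lower : -2 < tr := htr' ▸ neg_two_lt_halfIntegerSlopeTrace hx (neg_one_le_cos b)
  have upper_iff := htr' ▸ halfIntegerSlopeTrace_lt_two_iff hx (cos b)
  exact ⟨lower, upper_iff, fun ⟨hb₁, hb₂⟩ ↦ ⟨lower, upper_iff.2 (cos_lt_of_arccos_lt hb₁ hb₂.le)⟩⟩
end

section
/- For every l > 0, 2·arccos(tanh(l/2)) < arccos(tanh²(l/2) - 1/cosh(l/2)). -/
theorem arccos_inequality (l : ℝ) (hl : 0 < l) :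
    2 * Real.arccos (Real.tanh (l / 2)) <
      Real.arccos (Real.tanh (l / 2) ^ 2 - 1 / Real.cosh (l / 2)) := by
  set t := Real.tanh (l / 2) with ht
  set c := Real.cosh (l / 2) with hc
  have hl2 : 0 < l / 2 := by linarith
  have hc1 : 1 < c := by
    rw [hc]; exact Real.one_lt_cosh.mpr (by positivity)
  have hc0 : 0 < c := by linarith
  have hs0 : 0 < Real.sinh (l / 2) := Real.sinh_pos_iff.mpr hl2
  have hsc : Real.sinh (l / 2) < c := Real.sinh_lt_cosh _
  have ht0 : 0 < t := by
    rw [ht, Real.tanh_eq_sinh_div_cosh]; positivity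
  have ht1 : t < 1 := by
    rw [ht, Real.tanh_eq_sinh_div_cosh]
    rw [div_lt_one hc0]; exact hsc
  have htsq : t ^ 2 = 1 - 1 / c ^ 2 := by
    rw [ht, hc, Real.tanh_eq_sinh_div_cosh, div_pow, Real.sinh_sq]
    field_simp
  -- key inequality
  have hkey : t ^ 2 - 1 / c < 2 * t ^ 2 - 1 := by
    rw [htsq]
    have h1 : 1 / c ^ 2 < 1 / c := by
      apply one_div_lt_one_div_of_lt hc0
      nlinarith
    nlinarith
  have h2t : (-1 : ℝ) ≤ 2 * t ^ 2 - 1 := by nlinarith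
  have h2t' : 2 * t ^ 2 - 1 ≤ 1 := by nlinarith
  have heq : Real.arccos (2 * t ^ 2 - 1) = 2 * Real.arccos t := by
    have hcos : Real.cos (2 * Real.arccos t) = 2 * t ^ 2 - 1 := by
      rw [Real.cos_two_mul, Real.cos_arccos (by linarith) (by linarith)]
    rw [← hcos, Real.arccos_cos]
    · have := Real.arccos_nonneg t; linarith
    · have := Real.arccos_le_pi_div_two.mpr ht0.le
      linarith
  rw [← heq]
  apply Real.strictAntiOn_arccos _ _ hkey
  · constructor
    · have h1 : 1 / c < 1 := by
        rw [div_lt_one hc0]; linarith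
      nlinarith
    · nlinarith
  · exact ⟨h2t, h2t'⟩
end
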